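/- arXiv:2303.02391 — 2 statements merged into one kernel-verified Lean document; each statement's English description precedes it below -/
import Mathlib

section
/- Let N ≥ 2, let q_1,…,q_N ∈ ℂ be pairwise distinct, let z, η ∈ ℂ with z ≠ 0, η ≠ 0, and q_i − q_j + η ≠ 0 for all i, j. Define L^η(z) ∈ Mat_N(ℂ) by L^η_{ij}(z) = η·( 1/(q_i − q_j + η) − 1/(N·z) )·∏_{k≠j} (q_j − q_k − η)/(q_j − q_k). Then the factorization g(z,q)·L^η(z) = g(z−η, q) holds; equivalently, when g(z,q) is invertible, L^η(z) = g(z,q)^{−1}·g(z−η,q). -/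
open Matrix Finset
open scoped Kronecker

noncomputable section

/-- `ρ(i)`: in 1-based terms ρ(i) = i−1 for 1 ≤ i ≤ N−1 and ρ(N) = N. -/
def rho (N : ℕ) (i : Fin N) : ℕ := if (i : ℕ) = N - 1 then N else (i : ℕ)

/-- `q̄_j = q_j − (1/N)·Σ_k q_k`. -/
def qbar (N : ℕ) (q : Fin N → ℂ) (j : Fin N) : ℂ := q j - (∑ k, q k) / N

/-- The generalized Vandermonde matrix `Ξ(z,q)` with entries `(z + q̄_j)^{ρ(i)}`. -/
def Xi (N : ℕ) (z : ℂ) (q : Fin N → ℂ) : Matrix (Fin N) (Fin N) ℂ :=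
  Matrix.of fun i j => (z + qbar N q j) ^ rho N i

/-- The diagonal matrix `D(q)` with `D_{ii}(q) = ∏_{k≠i}(q_i − q_k)`. -/
def Dmat (N : ℕ) (q : Fin N → ℂ) : Matrix (Fin N) (Fin N) ℂ :=
  Matrix.diagonal fun i => ∏ k ∈ Finset.univ.erase i, (q i - q k)

/-- The IRF-Vertex transformation matrix `g(z,q) = Ξ(z,q)·D(q)⁻¹`. -/
def gmat (N : ℕ) (z : ℂ) (q : Fin N → ℂ) : Matrix (Fin N) (Fin N) ℂ :=
  Xi N z q * (Dmat N q)⁻¹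

/-- The matrix `L^η(z)` with entries
`L^η_{ij}(z) = η·(1/(q_i−q_j+η) − 1/(N·z))·∏_{k≠j}(q_j−q_k−η)/(q_j−q_k)`. -/
def Lmat (N : ℕ) (eta z : ℂ) (q : Fin N → ℂ) : Matrix (Fin N) (Fin N) ℂ :=
  Matrix.of fun i j =>
    eta * (1 / (q i - q j + eta) - 1 / ((N : ℂ) * z)) *
      ∏ k ∈ Finset.univ.erase j, ((q j - q k - eta) / (q j - q k))

/-! Put `x_j = z + q̄_j`, `t = x_m − η`, `S = Σ_j x_j = N z` and let `ℓ = ∏_k (X − x_k)` be the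
nodal polynomial; `D(q)⁻¹` is the diagonal of Lagrange weights `w_j = ∏_{k≠j} (x_j − x_k)⁻¹`, and
`L^η_{jm} = ℓ(t) ((t − x_j)⁻¹ + S⁻¹) w_m`. For `f = X^p` with `p = ρ(i) ≤ N`, the barycentric
formula gives `ℓ(t) Σ_j w_j f(x_j)/(t − x_j) = f(t) − [p = N] ℓ(t)`, while the subleading
coefficient gives `Σ_j w_j f(x_j) = [p = N − 1] + [p = N] S`. Since `ρ` skips `N − 1`, the two
corrections cancel and the `(i, m)` entry of `g(z,q) L^η(z)` is `t^p w_m`, the entry of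
`g(z − η, q)`. The hypothesis on `q_i − q_j + η` says exactly that `t` is not a node. -/

namespace Lagrange

open Polynomial

variable {F ι : Type*} [Field F] {s : Finset ι} {v : ι → F} {f : F[X]}

theorem degree_sub_C_coeff_mul_nodal_lt (hf : f.natDegree ≤ #s) :
    (f - C (f.coeff #s) * nodal s v).degree < #s := by
  rw [degree_lt_iff_coeff_zero]
  intro m hm
  rw [coeff_sub, coeff_C_mul]
  rcases hm.eq_or_lt with rfl | hlt
  · rw [← natDegree_nodal (v := v), (nodal_monic (s := s) (v := v)).coeff_natDegree, mul_one,
      sub_self]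
  · rw [coeff_eq_zero_of_natDegree_lt (hf.trans_lt hlt),
      coeff_eq_zero_of_natDegree_lt (p := nodal s v) (by rwa [natDegree_nodal]), mul_zero, sub_zero]

variable [DecidableEq ι]

theorem eval_nodal_mul_sum_nodalWeight_mul_inv_sub (hvs : Set.InjOn v s)
    (hf : f.natDegree ≤ #s) {t : F} (ht : ∀ i ∈ s, t ≠ v i) :
    eval t (nodal s v) * ∑ i ∈ s, nodalWeight s v i * (t - v i)⁻¹ * f.eval (v i) =
      f.eval t - f.coeff #s * eval t (nodal s v) := by
  set r := f - C (f.coeff #s) * nodal s v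
  have hr_node : ∀ i ∈ s, r.eval (v i) = f.eval (v i) := fun i hi => by
    simp [r, eval_nodal_at_node hi]
  calc eval t (nodal s v) * ∑ i ∈ s, nodalWeight s v i * (t - v i)⁻¹ * f.eval (v i)
      = eval t (interpolate s v fun i => r.eval (v i)) := by
        rw [eval_interpolate_not_at_node _ ht]
        exact congrArg _ (sum_congr rfl fun i hi => by rw [hr_node i hi])
    _ = r.eval t := by rw [← eq_interpolate hvs (degree_sub_C_coeff_mul_nodal_lt hf)]
    _ = f.eval t - f.coeff #s * eval t (nodal s v) := by simp [r]

theorem sum_nodalWeight_mul_eval (hvs : Set.InjOn v s) (hs : s.Nonempty)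
    (hf : f.natDegree ≤ #s) :
    ∑ i ∈ s, nodalWeight s v i * f.eval (v i) = f.coeff (#s - 1) + f.coeff #s * ∑ i ∈ s, v i := by
  have hcoeff := coeff_eq_sum hvs (degree_sub_C_coeff_mul_nodal_lt (v := v) hf)
  rw [coeff_sub, coeff_C_mul, nodal_eq, prod_X_sub_C_coeff_card_pred s v hs.card_pos, mul_neg,
    sub_neg_eq_add, ← nodal_eq] at hcoeff
  rw [hcoeff]
  refine sum_congr rfl fun i hi => ?_
  simp [eval_nodal_at_node hi, nodalWeight, prod_inv_distrib, div_eq_inv_mul]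

theorem sum_eval_mul_nodalWeight_mul_eval_nodal_mul_inv_sub_add_inv_sum (hvs : Set.InjOn v s)
    (hf : f.natDegree ≤ #s) (hf' : f.coeff (#s - 1) = 0) (hS : ∑ i ∈ s, v i ≠ 0) {t : F}
    (ht : ∀ i ∈ s, t ≠ v i) :
    ∑ i ∈ s, f.eval (v i) * nodalWeight s v i *
        (eval t (nodal s v) * ((t - v i)⁻¹ + (∑ j ∈ s, v j)⁻¹)) = f.eval t := by
  have hs : s.Nonempty := nonempty_of_sum_ne_zero hS
  calc ∑ i ∈ s, f.eval (v i) * nodalWeight s v i *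
        (eval t (nodal s v) * ((t - v i)⁻¹ + (∑ j ∈ s, v j)⁻¹))
      = eval t (nodal s v) * ∑ i ∈ s, nodalWeight s v i * (t - v i)⁻¹ * f.eval (v i) +
          eval t (nodal s v) * (∑ j ∈ s, v j)⁻¹ * ∑ i ∈ s, nodalWeight s v i * f.eval (v i) := by
        rw [mul_sum, mul_sum, ← sum_add_distrib]
        exact sum_congr rfl fun i _ => by ring
    _ = f.eval t := by
        rw [eval_nodal_mul_sum_nodalWeight_mul_inv_sub hvs hf ht,
          sum_nodalWeight_mul_eval hvs hs hf, hf', zero_add]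
        field_simp
        ring

end Lagrange

open Lagrange Polynomial

def nodes (N : ℕ) (z : ℂ) (q : Fin N → ℂ) (j : Fin N) : ℂ := z + qbar N q j

section

variable {N : ℕ}

theorem rho_le (i : Fin N) : rho N i ≤ N := by
  unfold rho; split_ifs <;> omega

theorem rho_ne_sub_one (i : Fin N) : rho N i ≠ N - 1 := by
  unfold rho; split_ifs <;> omega

variable (q : Fin N → ℂ)

theorem sum_qbar : ∑ j, qbar N q j = 0 := by
  rcases N.eq_zero_or_pos with rfl | hN
  · simp
  · have hN' : (N : ℂ) ≠ 0 := Nat.cast_ne_zero.2 hN.ne'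
    simp [qbar, sum_sub_distrib, mul_div_cancel₀ _ hN']

theorem qbar_sub_qbar (j k : Fin N) : qbar N q j - qbar N q k = q j - q k := by
  simp only [qbar]; ring

theorem sum_nodes (z : ℂ) : ∑ j, nodes N z q j = N * z := by
  simp [nodes, sum_add_distrib, sum_qbar]

theorem nodes_sub_nodes (z : ℂ) (j k : Fin N) : nodes N z q j - nodes N z q k = q j - q k := by
  simp only [nodes]; linear_combination qbar_sub_qbar q j k

theorem nodalWeight_nodes (z : ℂ) : nodalWeight univ (nodes N z q) = nodalWeight univ q := by
  ext j; simp only [nodalWeight, nodes_sub_nodes]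

variable {q}

theorem nodes_injective (hq : Function.Injective q) (z : ℂ) : Function.Injective (nodes N z q) :=
  fun j k h => hq (sub_eq_zero.1 (by rw [← nodes_sub_nodes q z, h, sub_self]))

theorem Dmat_inv (hq : Function.Injective q) : (Dmat N q)⁻¹ = diagonal (nodalWeight univ q) := by
  refine inv_eq_right_inv ?_
  rw [Dmat, diagonal_mul_diagonal, ← diagonal_one]
  congr 1; ext j
  rw [nodalWeight, prod_inv_distrib]
  exact mul_inv_cancel₀ <|
    prod_ne_zero_iff.2 fun k hk => sub_ne_zero.2 (hq.ne (ne_of_mem_erase hk).symm)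

theorem gmat_apply (hq : Function.Injective q) (z : ℂ) (i j : Fin N) :
    gmat N z q i j = nodes N z q j ^ rho N i * nodalWeight univ q j := by
  rw [gmat, Dmat_inv hq, mul_diagonal]; rfl

theorem Lmat_apply (eta z : ℂ) (j m : Fin N) :
    Lmat N eta z q j m =
      eval (nodes N z q m - eta) (nodal univ (nodes N z q)) *
        ((nodes N z q m - eta - nodes N z q j)⁻¹ + (∑ k, nodes N z q k)⁻¹) *
          nodalWeight univ q m := by
  set x := nodes N z q
  have hdiff : ∀ j k, q j - q k = x j - x k := fun j k => (nodes_sub_nodes q z j k).symm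
  rw [nodal_eq_mul_nodal_erase (mem_univ m), eval_mul, eval_nodal, sum_nodes,
    ← nodalWeight_nodes q z, Lmat, of_apply, prod_div_distrib, nodalWeight, prod_inv_distrib]
  simp only [hdiff, eval_sub, eval_X, eval_C]
  rw [show x j - x m + eta = -(x m - eta - x j) by ring, one_div, one_div, inv_neg]
  rw [show ∏ k ∈ univ.erase m, (x m - x k - eta) = ∏ k ∈ univ.erase m, (x m - eta - x k) from
    prod_congr rfl fun k _ => by ring]
  ring

end

theorem gmat_factorization_general (N : ℕ) (q : Fin N → ℂ)
    (hq : Function.Injective q) (z eta : ℂ) (hz : z ≠ 0)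
    (hqe : ∀ i j : Fin N, q i - q j + eta ≠ 0) :
    gmat N z q * Lmat N eta z q = gmat N (z - eta) q := by
  ext i m
  have hS : ∑ k, nodes N z q k ≠ 0 := by
    rw [sum_nodes]; exact mul_ne_zero (Nat.cast_ne_zero.2 (Fin.pos i).ne') hz
  have ht : ∀ j ∈ univ, nodes N z q m - eta ≠ nodes N z q j := fun j _ h =>
    hqe j m (by rw [← nodes_sub_nodes q z, ← h]; ring)
  set x := nodes N z q
  have hdeg : (X ^ rho N i : ℂ[X]).natDegree ≤ #(univ : Finset (Fin N)) := by
    simpa using rho_le i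
  have hcoeff : (X ^ rho N i : ℂ[X]).coeff (#(univ : Finset (Fin N)) - 1) = 0 := by
    simpa [coeff_X_pow] using (rho_ne_sub_one i).symm
  simp only [mul_apply, gmat_apply hq, Lmat_apply]
  calc ∑ j, x j ^ rho N i * nodalWeight univ q j * (eval (x m - eta) (nodal univ x) *
          ((x m - eta - x j)⁻¹ + (∑ k, x k)⁻¹) * nodalWeight univ q m)
      = (∑ j, (X ^ rho N i : ℂ[X]).eval (x j) * nodalWeight univ x j *
          (eval (x m - eta) (nodal univ x) * ((x m - eta - x j)⁻¹ + (∑ k, x k)⁻¹))) *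
          nodalWeight univ q m := by
        rw [nodalWeight_nodes, sum_mul]
        exact sum_congr rfl fun j _ => by simp only [eval_pow, eval_X]; ring
    _ = nodes N (z - eta) q m ^ rho N i * nodalWeight univ q m := by
        rw [sum_eval_mul_nodalWeight_mul_eval_nodal_mul_inv_sub_add_inv_sum
          ((nodes_injective hq z).injOn) hdeg hcoeff hS ht, eval_pow, eval_X]
        simp only [x, nodes]; ring

/-- Factorization property: `g(z,q)·L^η(z) = g(z−η,q)`. -/
theorem gmat_factorization (N : ℕ) (hN : 2 ≤ N) (q : Fin N → ℂ)
    (hq : Function.Injective q) (z eta : ℂ) (hz : z ≠ 0) (heta : eta ≠ 0)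
    (hqe : ∀ i j : Fin N, q i - q j + eta ≠ 0) :
    gmat N z q * Lmat N eta z q = gmat N (z - eta) q :=
  gmat_factorization_general N q hq z eta hz hqe
end
end

section
/- (Lemma 4.1) Let N ≥ 2, let ℏ, z_1, z_2 ∈ ℂ with ℏ ≠ 0, z_1 ≠ z_2, z_1 + ℏ ≠ 0, z_2 ≠ 0, and let q_1,…,q_N ∈ ℂ be pairwise distinct. Then the semi-dynamical rational GL_N R-matrix satisfies the symmetry-of-arguments property R^{sd}(ℏ, z_1, z_2 | q) = R^{sd}(z_1−z_2, ℏ+z_2, z_2 | q) · P_{12}. -/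
/-! Since `(E_{ij} ⊗ E_{kl}) P₁₂ = E_{il} ⊗ E_{kj}`, right multiplication by `P₁₂` exchanges the
families `E_{ij} ⊗ E_{ji}` and `E_{ii} ⊗ E_{jj}` of `R^{sd}` and fixes the other three. For
`R^{sd}(z₁ - z₂, ℏ + z₂, z₂ | q)` this trades the coefficients `1/((ℏ + z₂) - z₂) = 1/ℏ` and
`1/(z₁ - z₂)` of those two families, while `(ℏ + z₂) + (z₁ - z₂) = z₁ + ℏ` leaves the third
family and the diagonal unchanged. -/

open Matrix Finset
open scoped Kronecker

noncomputable section

/-- The matrix unit `E_{ij}`. -/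
def Eu (N : ℕ) (i j : Fin N) : Matrix (Fin N) (Fin N) ℂ := Matrix.single i j 1

/-- The permutation operator `P_{12} = Σ_{i,j} E_{ij} ⊗ E_{ji}`. -/
def Pmat (N : ℕ) : Matrix (Fin N × Fin N) (Fin N × Fin N) ℂ :=
  ∑ i, ∑ j, Eu N i j ⊗ₖ Eu N j i

/-- The semi-dynamical rational GL_N R-matrix `R^{sd}(ℏ,z_1,z_2|q)`. -/
def Rsd (N : ℕ) (hb z1 z2 : ℂ) (q : Fin N → ℂ) : Matrix (Fin N × Fin N) (Fin N × Fin N) ℂ :=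
  (∑ i, ∑ j ∈ Finset.univ.erase i, (1/(z1 - z2) + (N : ℂ)/(q j - q i)) • (Eu N i j ⊗ₖ Eu N j i))
  + (∑ i, ∑ j ∈ Finset.univ.erase i, (1/hb + (N : ℂ)/(q j - q i)) • (Eu N i i ⊗ₖ Eu N j j))
  - (∑ i, ∑ j ∈ Finset.univ.erase i, (1/(z1 + hb) + (N : ℂ)/(q j - q i)) • (Eu N i j ⊗ₖ Eu N j j))
  + (∑ i, ∑ j ∈ Finset.univ.erase i, (1/z2 + (N : ℂ)/(q j - q i)) • (Eu N j j ⊗ₖ Eu N i j))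
  + (1/(z1 - z2) + 1/z2 + 1/hb - 1/(z1 + hb)) • ∑ i, Eu N i i ⊗ₖ Eu N i i

lemma Eu_apply (N : ℕ) (i j a b : Fin N) :
    Eu N i j a b = if i = a ∧ j = b then 1 else 0 := by
  simp [Eu, Matrix.single]

lemma Pmat_apply (N : ℕ) (a b c d : Fin N) :
    Pmat N (a, b) (c, d) = if a = d ∧ b = c then 1 else 0 := by
  simp [Pmat, Eu_apply, Matrix.sum_apply, Matrix.kroneckerMap_apply, ite_and]
  aesop

lemma mul_Pmat_apply (N : ℕ) (M : Matrix (Fin N × Fin N) (Fin N × Fin N) ℂ) (a b c d : Fin N) :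
    (M * Pmat N) (a, b) (c, d) = M (a, b) (d, c) := by
  simp [Matrix.mul_apply, Fintype.sum_prod_type, Pmat_apply, ite_and]

lemma Eu_kronecker_Eu_mul_Pmat (N : ℕ) (i j k l : Fin N) :
    (Eu N i j ⊗ₖ Eu N k l) * Pmat N = Eu N i l ⊗ₖ Eu N k j := by
  ext ⟨a, b⟩ ⟨c, d⟩
  simp only [mul_Pmat_apply, kroneckerMap_apply, Eu_apply]
  split_ifs <;> simp_all

lemma Rsd_mul_Pmat (N : ℕ) (hb z1 z2 : ℂ) (q : Fin N → ℂ) :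
    Rsd N hb z1 z2 q * Pmat N =
      (∑ i, ∑ j ∈ univ.erase i, (1/(z1 - z2) + (N : ℂ)/(q j - q i)) • (Eu N i i ⊗ₖ Eu N j j))
      + (∑ i, ∑ j ∈ univ.erase i, (1/hb + (N : ℂ)/(q j - q i)) • (Eu N i j ⊗ₖ Eu N j i))
      - (∑ i, ∑ j ∈ univ.erase i, (1/(z1 + hb) + (N : ℂ)/(q j - q i)) • (Eu N i j ⊗ₖ Eu N j j))
      + (∑ i, ∑ j ∈ univ.erase i, (1/z2 + (N : ℂ)/(q j - q i)) • (Eu N j j ⊗ₖ Eu N i j))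
      + (1/(z1 - z2) + 1/z2 + 1/hb - 1/(z1 + hb)) • ∑ i, Eu N i i ⊗ₖ Eu N i i := by
  simp only [Rsd, add_mul, sub_mul, Finset.sum_mul, smul_mul_assoc, Eu_kronecker_Eu_mul_Pmat]

theorem Rsd_symmetry_of_arguments_general (N : ℕ) (hb z1 z2 : ℂ)
    (q : Fin N → ℂ) :
    Rsd N hb z1 z2 q = Rsd N (z1 - z2) (hb + z2) z2 q * Pmat N := by
  have h_hb : hb + z2 - z2 = hb := by ring
  have h_sum : hb + z2 + (z1 - z2) = z1 + hb := by ring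
  rw [Rsd_mul_Pmat, h_hb, h_sum, Rsd]
  congr 1
  · abel
  · congr 1; ring

/-- Lemma 4.1. Symmetry-of-arguments property of the semi-dynamical
rational GL_N R-matrix: `R^{sd}(ℏ,z_1,z_2|q) = R^{sd}(z_1−z_2, ℏ+z_2, z_2|q)·P₁₂`. -/
theorem Rsd_symmetry_of_arguments (N : ℕ) (hN : 2 ≤ N) (hb z1 z2 : ℂ) (hhb : hb ≠ 0)
    (h12 : z1 ≠ z2) (hz1p : z1 + hb ≠ 0) (hz2 : z2 ≠ 0)
    (q : Fin N → ℂ) (hq : Function.Injective q) :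
    Rsd N hb z1 z2 q = Rsd N (z1 - z2) (hb + z2) z2 q * Pmat N :=
  Rsd_symmetry_of_arguments_general N hb z1 z2 q
end
end
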